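/- arXiv:2002.11648 — 7 statements merged into one kernel-verified Lean document; each statement's English description precedes it below -/
import Mathlib

section
/- For all γ ∈ (0,1) and φ > 0, the function H(γ) = φ·(γ/2)/(1 + γ/2) satisfies H(γ) > (φ/3)γ, and consequently v_−(γ) < H(γ) where v_−(γ) = φ·(1 − γ/2 + γ²/4 − √(1−γ))/(3 − γ + γ²/4). -/
/-!
Clearing the denominator of `H`, the first inequality reduces to `γ < 1`. For the second, the
bound `1 - γ ≤ √(1 - γ)` on `[0, 1]` turns `v₋ ≤ (φ / 3) γ` into `0 ≤ (1 - γ)(6 - γ)`, so `v₋`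
lies below the line `(φ / 3) γ`, which in turn lies strictly below `H`.
-/

namespace GeneralLotto

noncomputable section

def H (φ γ : ℝ) : ℝ := φ * (γ / 2) / (1 + γ / 2)

def vMinus (φ γ : ℝ) : ℝ :=
  φ * (1 - γ / 2 + γ ^ 2 / 4 - Real.sqrt (1 - γ)) / (3 - γ + γ ^ 2 / 4)

end

theorem third_mul_lt_H {φ γ : ℝ} (hφ : 0 < φ) (hγ0 : 0 < γ) (hγ1 : γ < 1) :
    φ / 3 * γ < H φ γ := by
  rw [H, lt_div_iff₀ (by linarith)]
  nlinarith [mul_pos hφ (mul_pos hγ0 (sub_pos.2 hγ1))]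

theorem sub_le_sqrt_one_sub {γ : ℝ} (hγ0 : 0 ≤ γ) (hγ1 : γ ≤ 1) : 1 - γ ≤ Real.sqrt (1 - γ) :=
  Real.le_sqrt_of_sq_le (by nlinarith)

theorem vMinus_le_third_mul {φ γ : ℝ} (hφ : 0 ≤ φ) (hγ0 : 0 ≤ γ) (hγ1 : γ ≤ 1) :
    vMinus φ γ ≤ φ / 3 * γ := by
  have hsqrt := sub_le_sqrt_one_sub hγ0 hγ1
  have hfactor : 0 ≤ (1 - γ) * (6 - γ) := mul_nonneg (by linarith) (by linarith)
  rw [vMinus, div_le_iff₀ (by nlinarith [sq_nonneg (γ / 2 - 1)])]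
  nlinarith [mul_le_mul_of_nonneg_left hsqrt hφ, mul_nonneg (mul_nonneg hφ hγ0) hfactor]

end GeneralLotto

theorem H_gt_third_gamma_and_v_minus_lt_H
    (γ φ : ℝ) (hγ0 : 0 < γ) (hγ1 : γ < 1) (hφ : 0 < φ) :
    φ * (γ / 2) / (1 + γ / 2) > (φ / 3) * γ ∧
    φ * (1 - γ / 2 + γ ^ 2 / 4 - Real.sqrt (1 - γ)) / (3 - γ + γ ^ 2 / 4)
      < φ * (γ / 2) / (1 + γ / 2) := by
  have hH : φ / 3 * γ < GeneralLotto.H φ γ := GeneralLotto.third_mul_lt_H hφ hγ0 hγ1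
  exact ⟨hH, (GeneralLotto.vMinus_le_third_mul hφ.le hγ0.le hγ1.le).trans_lt hH⟩
end

section
/- For γ ∈ (0,1) and φ > 0, v_+(γ) := (φ/2)·((2 − γ + γ²/2) + 2√(1−γ))/(3 − γ + γ²/4) is strictly decreasing in γ, with limit 2φ/3 as γ → 0 and value φ/3 at γ = 1; moreover v_+(γ) > H(γ) := φ·(γ/2)/(1+γ/2) for all γ ∈ (0,1). -/
/-!
Substituting `s = √(1 - γ)` turns `v₊(γ) / φ` into the rational function
`(3 + 4 s + s⁴) / (9 + 2 s² + s⁴)`, whose cross-multiplied difference quotient is positive on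
`[0, 1]²`; since `s` decreases with `γ`, `v₊` is strictly decreasing. The limit at `0` is the value there,
`v₊` being continuous because its denominator `3 - γ + γ²/4 = (γ - 2)²/4 + 2` never vanishes.
Finally `v₊(γ) > H(γ)` reduces, after clearing denominators, to
`(1 - γ)(2 - γ) + 2 √(1 - γ) (1 + γ/2) > 0`.
-/

open Set Filter Topology

noncomputable def vPlus (φ γ : ℝ) : ℝ :=
  (φ / 2) * ((2 - γ + γ ^ 2 / 2) + 2 * √(1 - γ)) / (3 - γ + γ ^ 2 / 4)

noncomputable def vPlusOfSqrt (s : ℝ) : ℝ :=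
  (3 + 4 * s + s ^ 4) / (9 + 2 * s ^ 2 + s ^ 4)

lemma three_sub_add_sq_div_four_pos (γ : ℝ) : 0 < 3 - γ + γ ^ 2 / 4 := by
  nlinarith [sq_nonneg (γ - 2)]

lemma vPlus_eq_mul_vPlusOfSqrt (φ : ℝ) {γ : ℝ} (hγ : γ ≤ 1) :
    vPlus φ γ = φ * vPlusOfSqrt √(1 - γ) := by
  have hs : √(1 - γ) ^ 2 = 1 - γ := Real.sq_sqrt (by linarith)
  rw [vPlus, vPlusOfSqrt, mul_div_assoc']
  generalize √(1 - γ) = s at hs ⊢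
  obtain rfl : γ = 1 - s ^ 2 := by linarith
  rw [div_eq_div_iff (three_sub_add_sq_div_four_pos _).ne' (by positivity)]
  ring

lemma vPlusOfSqrt_strictMonoOn : StrictMonoOn vPlusOfSqrt (Icc 0 1) := by
  rintro q ⟨hq0, hq1⟩ p ⟨hp0, hp1⟩ hqp
  rw [vPlusOfSqrt, vPlusOfSqrt, div_lt_div_iff₀ (by positivity) (by positivity)]
  have hpq : 0 ≤ p * q := mul_nonneg hp0 hq0
  have hpq1 : p * q ≤ 1 := mul_le_one₀ hp1 hq0 hq1
  have hsq : p ^ 2 + p * q + q ^ 2 ≤ 3 := by nlinarith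
  -- the cross difference is `(p - q) * K`, and the negative terms of `K` are at most `8 + 12 < 36 - 12`
  have hK : 0 < 36 - 6 * (p + q) + 6 * (p + q) * (p ^ 2 + q ^ 2) - 8 * (p * q)
      - 4 * (p * q) * (p ^ 2 + p * q + q ^ 2) + 2 * (p * q) ^ 2 * (p + q) := by
    nlinarith [mul_le_mul hpq1 hsq (by positivity) zero_le_one]
  nlinarith [mul_pos (sub_pos.2 hqp) hK]

lemma strictAntiOn_sqrt_one_sub : StrictAntiOn (fun γ : ℝ ↦ √(1 - γ)) (Iic 1) :=
  fun _ _ _ hb hab ↦ Real.sqrt_lt_sqrt (by linarith [mem_Iic.1 hb]) (by linarith)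

lemma vPlus_strictAntiOn {φ : ℝ} (hφ : 0 < φ) : StrictAntiOn (vPlus φ) (Ioo 0 1) := by
  have hmaps : MapsTo (fun γ : ℝ ↦ √(1 - γ)) (Ioo 0 1) (Icc 0 1) := fun γ hγ ↦
    ⟨Real.sqrt_nonneg _, Real.sqrt_le_one.2 (by linarith [hγ.1])⟩
  intro a ha b hb hab
  rw [vPlus_eq_mul_vPlusOfSqrt φ hb.2.le, vPlus_eq_mul_vPlusOfSqrt φ ha.2.le]
  exact mul_lt_mul_of_pos_left
    (vPlusOfSqrt_strictMonoOn.comp_strictAntiOn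
      (strictAntiOn_sqrt_one_sub.mono fun _ h ↦ h.2.le) hmaps ha hb hab) hφ

lemma continuous_vPlus (φ : ℝ) : Continuous (vPlus φ) :=
  Continuous.div (by fun_prop) (by fun_prop) fun γ ↦ (three_sub_add_sq_div_four_pos γ).ne'

lemma vPlus_zero (φ : ℝ) : vPlus φ 0 = 2 * φ / 3 := by
  norm_num [vPlus]
  ring

lemma vPlus_one (φ : ℝ) : vPlus φ 1 = φ / 3 := by
  norm_num [vPlus]
  ring

lemma lt_vPlus {φ γ : ℝ} (hφ : 0 < φ) (hγ₀ : -2 < γ) (hγ₁ : γ < 1) :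
    φ * (γ / 2) / (1 + γ / 2) < vPlus φ γ := by
  have hs : 0 ≤ √(1 - γ) := Real.sqrt_nonneg _
  rw [vPlus, div_lt_div_iff₀ (by linarith) (three_sub_add_sq_div_four_pos γ)]
  have key : 0 < (1 - γ) * (2 - γ) + 2 * √(1 - γ) * (1 + γ / 2) := by
    have : 0 ≤ √(1 - γ) * (1 + γ / 2) := mul_nonneg hs (by linarith)
    nlinarith [mul_pos (sub_pos.2 hγ₁) (by linarith : (0 : ℝ) < 2 - γ)]
  nlinarith [mul_pos hφ key]

theorem v_plus_decreasing_limits_and_gt_H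
    (φ : ℝ) (hφ : 0 < φ) (vp : ℝ → ℝ)
    (hvp : ∀ γ, vp γ = (φ / 2) * ((2 - γ + γ ^ 2 / 2) + 2 * Real.sqrt (1 - γ))
        / (3 - γ + γ ^ 2 / 4)) :
    StrictAntiOn vp (Set.Ioo 0 1) ∧
    Filter.Tendsto vp (nhdsWithin 0 (Set.Ioi 0)) (nhds (2 * φ / 3)) ∧
    vp 1 = φ / 3 ∧
    ∀ γ ∈ Set.Ioo (0 : ℝ) 1, vp γ > φ * (γ / 2) / (1 + γ / 2) := by
  obtain rfl : vp = vPlus φ := funext hvp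
  refine ⟨vPlus_strictAntiOn hφ, ?_, vPlus_one φ, fun γ hγ ↦ lt_vPlus hφ (by linarith [hγ.1]) hγ.2⟩
  rw [← vPlus_zero φ]
  exact (continuous_vPlus φ).continuousWithinAt
end

section
/- Let γ ∈ (0,1), φ > 0, Q(v) = v²(3 − γ + γ²/4) + vφ(−2 + γ − γ²/2) + (γ²/4)φ², and let v_− be the smaller root of Q. Define F(v) = v(2 − γ) − (v + ((φ − v)/2)γ − √(Q(v))) for v ∈ [0, v_−). Then F(0) = 0 and F'(v) = 1 − γ/2 + Q'(v)/(2√(Q(v))) < 0 on (0, v_−); consequently F(v) < 0 for all v ∈ (0, v_−). -/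
/-!
Write `Q v = a v² + b v + c` with `a > 0` and discriminant `s² = 4(1 - γ)φ²`, so that
`v₋ = (-b - s) / (2a)`. Below `v₋` one has `Q' = 2av + b < -s ≤ 0`, and the identity
`Q'² = 4aQ + s²` gives both `Q > 0` and `k² · 4Q < Q'²` for the slope `k = 1 - γ/2`, because
`k² < a`. Hence `F v = k v - γφ/2 + √(Q v)` has derivative `k + Q'/(2√Q) < 0` there, so it is
strictly decreasing on `(-∞, v₋)` and `F v < F 0 = 0` for `0 < v < v₋`.
-/

open Real Set

section Quadratic

variable {a b c s k x : ℝ}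

lemma sq_two_mul_add_eq_four_mul_quadratic_add_discrim (a b c x : ℝ) :
    (2 * a * x + b) ^ 2 = 4 * a * (a * x ^ 2 + b * x + c) + discrim a b c := by
  rw [discrim]; ring

lemma hasDerivAt_quadratic (a b c x : ℝ) :
    HasDerivAt (fun x => a * x ^ 2 + b * x + c) (2 * a * x + b) x := by
  refine ((((hasDerivAt_pow 2 x).const_mul a).fun_add
    ((hasDerivAt_id' x).const_mul b)).add_const c).congr_deriv ?_
  push_cast; ring

lemma two_mul_add_lt_neg_of_lt_root (ha : 0 < a) (hx : x < (-b - s) / (2 * a)) :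
    2 * a * x + b < -s := by
  rw [lt_div_iff₀ (by positivity)] at hx
  linarith

lemma quadratic_pos_of_lt_root (ha : 0 < a) (hs : 0 ≤ s) (hsq : s ^ 2 = discrim a b c)
    (hx : x < (-b - s) / (2 * a)) : 0 < a * x ^ 2 + b * x + c := by
  have hd := two_mul_add_lt_neg_of_lt_root ha hx
  have hlt : s ^ 2 < (2 * a * x + b) ^ 2 := by
    rw [← neg_sq (2 * a * x + b)]; exact pow_lt_pow_left₀ (by linarith) hs two_ne_zero
  have h4 : 0 < 4 * a * (a * x ^ 2 + b * x + c) := by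
    linarith [sq_two_mul_add_eq_four_mul_quadratic_add_discrim a b c x]
  exact pos_of_mul_pos_right h4 (by positivity)

lemma add_div_two_mul_sqrt_neg {d q : ℝ} (hq : 0 < q) (hd : d < 0)
    (h : k ^ 2 * (4 * q) < d ^ 2) : k + d / (2 * √q) < 0 := by
  have hsqrt : 0 < √q := sqrt_pos.mpr hq
  have hsq : (2 * k * √q) ^ 2 < (-d) ^ 2 := by
    rw [mul_pow, sq_sqrt hq.le, neg_sq]; linarith
  have hlt : 2 * k * √q < -d := lt_of_abs_lt (abs_lt_of_sq_lt_sq hsq (by linarith))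
  have : d / (2 * √q) < -k := (div_lt_iff₀ (by positivity)).mpr (by linarith)
  linarith

lemma linear_add_sqrt_quadratic_deriv_neg (hk : k ^ 2 < a) (hs : 0 ≤ s)
    (hsq : s ^ 2 = discrim a b c) (hx : x < (-b - s) / (2 * a)) :
    k + (2 * a * x + b) / (2 * √(a * x ^ 2 + b * x + c)) < 0 := by
  have ha : 0 < a := (sq_nonneg k).trans_lt hk
  have hq := quadratic_pos_of_lt_root ha hs hsq hx
  have hd : 2 * a * x + b < 0 := (two_mul_add_lt_neg_of_lt_root ha hx).trans_le (by linarith)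
  refine add_div_two_mul_sqrt_neg hq hd ?_
  rw [sq_two_mul_add_eq_four_mul_quadratic_add_discrim a b c x, ← hsq]
  nlinarith

lemma hasDerivAt_linear_add_sqrt_quadratic (k e : ℝ) (hq : a * x ^ 2 + b * x + c ≠ 0) :
    HasDerivAt (fun x => k * x + e + √(a * x ^ 2 + b * x + c))
      (k + (2 * a * x + b) / (2 * √(a * x ^ 2 + b * x + c))) x := by
  simpa using (((hasDerivAt_id x).const_mul k).add_const e).fun_add
    ((hasDerivAt_quadratic a b c x).sqrt hq)

lemma strictAntiOn_linear_add_sqrt_quadratic (e : ℝ) (hk : k ^ 2 < a) (hs : 0 ≤ s)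
    (hsq : s ^ 2 = discrim a b c) :
    StrictAntiOn (fun x => k * x + e + √(a * x ^ 2 + b * x + c)) (Iio ((-b - s) / (2 * a))) := by
  have ha : 0 < a := (sq_nonneg k).trans_lt hk
  have hderiv : ∀ x ∈ Iio ((-b - s) / (2 * a)), HasDerivAt
      (fun x => k * x + e + √(a * x ^ 2 + b * x + c))
      (k + (2 * a * x + b) / (2 * √(a * x ^ 2 + b * x + c))) x :=
    fun x hx => hasDerivAt_linear_add_sqrt_quadratic k e (quadratic_pos_of_lt_root ha hs hsq hx).ne'
  refine strictAntiOn_of_deriv_neg (convex_Iio _)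
    (fun x hx => (hderiv x hx).continuousAt.continuousWithinAt) fun x hx => ?_
  rw [interior_Iio] at hx
  rw [(hderiv x hx).deriv]
  exact linear_add_sqrt_quadratic_deriv_neg hk hs hsq hx

end Quadratic

theorem fold_improvement_negative
    (γ φ : ℝ) (hγ0 : 0 < γ) (hγ1 : γ < 1) (hφ : 0 < φ)
    (Q F : ℝ → ℝ)
    (hQ : ∀ v, Q v = v ^ 2 * (3 - γ + γ ^ 2 / 4)
        + v * φ * (-2 + γ - γ ^ 2 / 2) + (γ ^ 2 / 4) * φ ^ 2)
    (vminus : ℝ)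
    (hvm : vminus = φ * (1 - γ / 2 + γ ^ 2 / 4 - Real.sqrt (1 - γ))
        / (3 - γ + γ ^ 2 / 4))
    (hF : ∀ v, F v = v * (2 - γ)
        - (v + ((φ - v) / 2) * γ - Real.sqrt (Q v))) :
    F 0 = 0 ∧
    (∀ v ∈ Set.Ioo 0 vminus,
      HasDerivAt F (1 - γ / 2 + deriv Q v / (2 * Real.sqrt (Q v))) v ∧
      1 - γ / 2 + deriv Q v / (2 * Real.sqrt (Q v)) < 0) ∧
    (∀ v ∈ Set.Ioo 0 vminus, F v < 0) := by
  have hk : (1 - γ / 2) ^ 2 < 3 - γ + γ ^ 2 / 4 := by nlinarith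
  set a := 3 - γ + γ ^ 2 / 4
  set b := φ * (-2 + γ - γ ^ 2 / 2)
  set s := 2 * φ * √(1 - γ)
  have hs : 0 ≤ s := by positivity
  have hsq : s ^ 2 = discrim a b (γ ^ 2 / 4 * φ ^ 2) := by
    rw [discrim, mul_pow, sq_sqrt (by linarith)]; ring
  have hvm' : vminus = (-b - s) / (2 * a) := by
    rw [hvm]; field_simp; ring
  have hQ' : Q = fun v => a * v ^ 2 + b * v + γ ^ 2 / 4 * φ ^ 2 :=
    funext fun v => by rw [hQ]; ring
  have hF' : F = fun v => (1 - γ / 2) * v + -(φ * γ / 2) + √(Q v) :=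
    funext fun v => by rw [hF]; ring
  have hF0 : F 0 = 0 := by
    rw [hF, hQ, show (0 : ℝ) ^ 2 * a + 0 * φ * (-2 + γ - γ ^ 2 / 2) + γ ^ 2 / 4 * φ ^ 2
      = (γ * φ / 2) ^ 2 by ring, sqrt_sq (by positivity)]
    ring
  subst hQ' hF' hvm'
  refine ⟨hF0, fun v hv => ?_, fun v hv => ?_⟩
  · have hQpos := quadratic_pos_of_lt_root ((sq_nonneg _).trans_lt hk) hs hsq hv.2
    rw [(hasDerivAt_quadratic _ _ _ v).deriv]
    exact ⟨hasDerivAt_linear_add_sqrt_quadratic _ _ hQpos.ne',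
      linear_add_sqrt_quadratic_deriv_neg hk hs hsq hv.2⟩
  · rw [← hF0]
    exact strictAntiOn_linear_add_sqrt_quadratic _ hk hs hsq (hv.1.trans hv.2) hv.2 hv.1
end

section
/- Two-player no-benefit theorem: for any budgets 0 < X_B < X_A, total value φ > 0, battlefield value v_b ∈ (0, φ), and pre-commitment t ∈ (0, X_B], the weaker player's payoff under the adversary's best response, −max{u_A^call(t), u_A^fold(t)}, is strictly less than its baseline payoff φ(X_B/X_A − 1). -/
/-!
Against a pre-commitment `t`, the adversary can already guarantee itself more than the baseline
by calling. Calling leaves it the share `1 - (X_B - t)/(X_A - t) = (X_A - X_B)/(X_A - t)` of the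
remaining value, which is at least its baseline share `r = (X_A - X_B)/X_A < 1`, and it also wins
`v > v r` outright; so `u_A^call(t) > (φ - v) r + v r = φ r`, which is minus the baseline of `B`.
-/

lemma div_le_one_sub_sub_div_sub {a b t : ℝ} (hba : b ≤ a) (ht : 0 ≤ t) (hta : t < a) :
    (a - b) / a ≤ 1 - (b - t) / (a - t) := by
  have hat : 0 < a - t := sub_pos.mpr hta
  calc (a - b) / a ≤ (a - b) / (a - t) :=
        div_le_div_of_nonneg_left (sub_nonneg.mpr hba) hat (by linarith)
    _ = 1 - (b - t) / (a - t) := by field_simp; ring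

lemma mul_lt_sub_mul_add {φ v r s : ℝ} (hv : 0 < v) (hvφ : v ≤ φ) (hrs : r ≤ s) (hr : r < 1) :
    φ * r < (φ - v) * s + v := by
  nlinarith [mul_le_mul_of_nonneg_left hrs (sub_nonneg.mpr hvφ), mul_lt_mul_of_pos_left hr hv]

theorem two_player_no_benefit_general
    (X_A X_B φ v t : ℝ)
    (hB : 0 < X_B) (hBA : X_B < X_A)
    (hv : 0 < v) (hvφ : v < φ)
    (ht0 : 0 < t) (htB : t ≤ X_B) :
    -max ((φ - v) * (1 - (X_B - t) / (X_A - t)) + v)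
         ((φ - v) * (1 - (X_B - t) / X_A) - v)
      < φ * (X_B / X_A - 1) := by
  have hA : 0 < X_A := hB.trans hBA
  have baseline : φ * (X_B / X_A - 1) = -(φ * ((X_A - X_B) / X_A)) := by
    field_simp; ring
  have share_lt_one : (X_A - X_B) / X_A < 1 := by
    rw [div_lt_one hA]; linarith
  have call_beats_baseline : φ * ((X_A - X_B) / X_A) < (φ - v) * (1 - (X_B - t) / (X_A - t)) + v :=
    mul_lt_sub_mul_add hv hvφ.le
      (div_le_one_sub_sub_div_sub hBA.le ht0.le (htB.trans_lt hBA)) share_lt_one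
  rw [baseline, neg_lt_neg_iff]
  exact call_beats_baseline.trans_le (le_max_left _ _)

theorem two_player_no_benefit
    (X_A X_B φ v t : ℝ)
    (hB : 0 < X_B) (hBA : X_B < X_A) (hφ : 0 < φ)
    (hv : 0 < v) (hvφ : v < φ)
    (ht0 : 0 < t) (htB : t ≤ X_B) :
    -max ((φ - v) * (1 - (X_B - t) / (X_A - t)) + v)
         ((φ - v) * (1 - (X_B - t) / X_A) - v)
      < φ * (X_B / X_A - 1) :=
  two_player_no_benefit_general X_A X_B φ v t hB hBA hv hvφ ht0 htB
end

section
/- In the three-player setting with budgets X_1, X_2 ∈ (0,1), X_A = 1, battlefield-set values φ₁, φ₂ > 0, v_b ∈ (0, φ₁), and Case 1 (i=1) baseline payoff π₁ = φ₁(X₁ − 1): for t* = X₁ − ((φ₁ − v_b)/φ₂)X₂ > 0, the inequality (φ₁ − v_b)·(1 − (1 − √(φ₂·((X₁−t*)/(1−t*))·(X₂/(1−t*))/(φ₁−v_b)))/((X₁−t*)/(1−t*))) − v_b ≥ φ₁(X₁ − 1) holds if and only if φ₂(X₁ + X₂ − 1) ≥ (φ₁ − v_b)X₂(X₁ − 1)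 + v_b·X₁·X₂. -/
/-!
Pre-committing `t*` makes the renormalised budgets `x = (X₁ - t*)/(1 - t*)` and `y = X₂/(1 - t*)`
proportional to the remaining values, `φ₂ x = (φ₁ - v_b) y`. The square root in A's Case 2 split
then collapses to `y`, the normalisation `1 - t*` cancels, and player 1's payoff becomes the
rational expression `φ₂ (X₁ + X₂ - 1) / X₂ - v_b`; comparing it with `φ₁ (X₁ - 1)` after
multiplying by `X₂ > 0` gives the stated condition.
-/

/-- Player 1's payoff against the adversary's Case 2 split, in the paper's notation with
`w₁ = φ₁ - v_b`, `w₂ = φ₂` and `x`, `y` the renormalised budgets of players 1 and 2. -/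
noncomputable def case2Payoff (w₁ w₂ x y : ℝ) : ℝ :=
  w₁ * (1 - (1 - Real.sqrt (w₂ * x * y / w₁)) / x)

lemma case2Payoff_of_proportional {w₁ w₂ x y : ℝ} (hw₁ : 0 < w₁) (hy : 0 ≤ y)
    (h : w₂ * x = w₁ * y) : case2Payoff w₁ w₂ x y = w₁ * (1 - (1 - y) / x) := by
  have hsq : w₂ * x * y / w₁ = y ^ 2 := by
    rw [h]; field_simp
  rw [case2Payoff, hsq, Real.sqrt_sq hy]

lemma case2Payoff_after_precommit {w φ2 X1 X2 t : ℝ} (hw : 0 < w) (hφ2 : 0 < φ2)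
    (hX2 : 0 < X2) (hX1 : X1 < 1) (ht : t = X1 - w / φ2 * X2) :
    case2Payoff w φ2 ((X1 - t) / (1 - t)) (X2 / (1 - t)) = φ2 * (X1 + X2 - 1) / X2 := by
  have hd : X1 - t = w / φ2 * X2 := by rw [ht]; ring
  have hs : 0 < 1 - t := by
    have : 0 < X1 - t := hd ▸ by positivity
    linarith
  have hprop : φ2 * ((X1 - t) / (1 - t)) = w * (X2 / (1 - t)) := by
    rw [hd]; field_simp
  rw [case2Payoff_of_proportional hw (by positivity) hprop, one_sub_div hs.ne',
    div_div_div_cancel_right₀ hs.ne', hd]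
  have hd' : φ2 * (X1 - t) = w * X2 := by rw [hd]; field_simp
  field_simp
  linear_combination -hd'

theorem three_player_case1_precommit_iff_general
    (X1 X2 φ1 φ2 vb : ℝ)
    (hX1' : X1 < 1) (hX2 : 0 < X2)
    (hφ2 : 0 < φ2) (hvbφ : vb < φ1)
    (t : ℝ) (ht : t = X1 - ((φ1 - vb) / φ2) * X2) :
    ((φ1 - vb) * (1 -
        (1 - Real.sqrt (φ2 * ((X1 - t) / (1 - t)) * (X2 / (1 - t)) / (φ1 - vb)))
          / ((X1 - t) / (1 - t))) - vb
      ≥ φ1 * (X1 - 1))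
    ↔ φ2 * (X1 + X2 - 1) ≥ (φ1 - vb) * X2 * (X1 - 1) + vb * X1 * X2 := by
  change case2Payoff (φ1 - vb) φ2 ((X1 - t) / (1 - t)) (X2 / (1 - t)) - vb ≥ _ ↔ _
  rw [case2Payoff_after_precommit (sub_pos.mpr hvbφ) hφ2 hX2 hX1' ht, ge_iff_le, ge_iff_le,
    le_sub_iff_add_le, le_div_iff₀ hX2]
  constructor <;> intro h <;> linarith

theorem three_player_case1_precommit_iff
    (X1 X2 φ1 φ2 vb : ℝ)
    (hX1 : 0 < X1) (hX1' : X1 < 1) (hX2 : 0 < X2) (hX2' : X2 < 1)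
    (hφ1 : 0 < φ1) (hφ2 : 0 < φ2) (hvb : 0 < vb) (hvbφ : vb < φ1)
    (t : ℝ) (ht : t = X1 - ((φ1 - vb) / φ2) * X2) (ht0 : 0 < t) :
    ((φ1 - vb) * (1 -
        (1 - Real.sqrt (φ2 * ((X1 - t) / (1 - t)) * (X2 / (1 - t)) / (φ1 - vb)))
          / ((X1 - t) / (1 - t))) - vb
      ≥ φ1 * (X1 - 1))
    ↔ φ2 * (X1 + X2 - 1) ≥ (φ1 - vb) * X2 * (X1 - 1) + vb * X1 * X2 :=
  three_player_case1_precommit_iff_general X1 X2 φ1 φ2 vb hX1' hX2 hφ2 hvbφ t ht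
end

section
/- In the three-player setting with Case 2 (i=1) baseline: for budgets X₁, X₂ ∈ (0,1), X_A = 1, φ₁, φ₂ > 0, v_b ∈ (0, φ₁) and t* = X₁ − ((φ₁ − v_b)/φ₂)X₂ > 0, player 1's payoff from pre-committing t* (A calling, Case 2 (i=2) split after renormalization) is at least its baseline payoff φ₁(X₁/√(φ₁X₁X₂/φ₂) − 1) if and only if φ₂(X₁ + X₂ − 1) ≥ √(φ₁φ₂X₁X₂) − (φ₁ − v_b)X₂. -/
/-!
Writing `a = φ₁ - v_b`, the choice of `t*` makes player 1's renormalised budget `r = (X₁ - t*)/(1 - t*)`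
and player 2's `s = X₂/(1 - t*)` satisfy `φ₂ r = a s`. Then the square root in the pre-commit payoff is
exactly `s`, and the payoff collapses to `φ₂ (X₁ + X₂ - 1)/X₂ - v_b`, while the baseline payoff is
`√(φ₁φ₂X₁X₂)/X₂ - φ₁`. Comparing the two and clearing the positive denominator `X₂` gives the criterion.
-/

open Real

lemma baseline_payoff_eq {X1 X2 φ1 φ2 : ℝ} (hX1 : 0 < X1) (hX2 : 0 < X2) (hφ1 : 0 < φ1)
    (hφ2 : 0 < φ2) :
    φ1 * (X1 / √(φ1 * X1 * X2 / φ2) - 1) = √(φ1 * φ2 * X1 * X2) / X2 - φ1 := by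
  set S := √(φ1 * φ2 * X1 * X2)
  have hS : 0 < S := by positivity
  have hS2 : S ^ 2 = φ1 * φ2 * X1 * X2 := sq_sqrt (by positivity)
  have hsqrt : √(φ1 * X1 * X2 / φ2) = S / φ2 := by
    rw [sqrt_eq_iff_eq_sq (by positivity) (by positivity), div_pow, hS2]
    field_simp
  rw [hsqrt]
  field_simp
  linear_combination -hS2

lemma balanced_payoff_eq {a φ r s : ℝ} (ha : 0 < a) (hr : 0 < r) (hs : 0 < s)
    (hbal : φ * r = a * s) :
    a * (1 - (1 - √(φ * r * s / a)) / r) = a - φ * (1 - s) / s := by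
  have hsqrt : √(φ * r * s / a) = s := by
    rw [hbal, sqrt_eq_iff_eq_sq (by positivity) hs.le]
    field_simp
  rw [hsqrt]
  field_simp
  linear_combination (1 - s) * hbal

lemma precommit_payoff_eq {X1 X2 φ1 φ2 vb t : ℝ} (hX1' : X1 < 1) (hX2 : 0 < X2)
    (hφ2 : 0 < φ2) (hvbφ : vb < φ1) (ht : t = X1 - ((φ1 - vb) / φ2) * X2) :
    (φ1 - vb) * (1 -
        (1 - √(φ2 * ((X1 - t) / (1 - t)) * (X2 / (1 - t)) / (φ1 - vb)))
          / ((X1 - t) / (1 - t))) - vb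
      = φ2 * (X1 + X2 - 1) / X2 - vb := by
  have ha : 0 < φ1 - vb := sub_pos.2 hvbφ
  have hXt : X1 - t = (φ1 - vb) / φ2 * X2 := by rw [ht]; ring
  have hbal : φ2 * (X1 - t) = (φ1 - vb) * X2 := by rw [hXt]; field_simp
  have h1t : 0 < 1 - t := by
    have : 0 < (φ1 - vb) / φ2 * X2 := by positivity
    linarith
  rw [balanced_payoff_eq ha (by rw [hXt]; positivity) (by positivity)
    (by rw [mul_div_assoc', hbal, mul_div_assoc])]
  field_simp
  linear_combination -hbal

lemma div_sub_le_div_sub_iff {a b c d x : ℝ} (hx : 0 < x) :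
    b / x - d ≤ a / x - c ↔ b - (d - c) * x ≤ a := by
  rw [← mul_le_mul_iff_of_pos_right hx, sub_mul, sub_mul, div_mul_cancel₀ _ hx.ne',
    div_mul_cancel₀ _ hx.ne']
  constructor <;> intro h <;> linarith

theorem three_player_case2_precommit_iff_general
    (X1 X2 φ1 φ2 vb : ℝ)
    (hX1 : 0 < X1) (hX1' : X1 < 1) (hX2 : 0 < X2)
    (hφ1 : 0 < φ1) (hφ2 : 0 < φ2) (hvbφ : vb < φ1)
    (t : ℝ) (ht : t = X1 - ((φ1 - vb) / φ2) * X2) :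
    ((φ1 - vb) * (1 -
        (1 - Real.sqrt (φ2 * ((X1 - t) / (1 - t)) * (X2 / (1 - t)) / (φ1 - vb)))
          / ((X1 - t) / (1 - t))) - vb
      ≥ φ1 * (X1 / Real.sqrt (φ1 * X1 * X2 / φ2) - 1))
    ↔ φ2 * (X1 + X2 - 1) ≥ Real.sqrt (φ1 * φ2 * X1 * X2) - (φ1 - vb) * X2 := by
  rw [precommit_payoff_eq hX1' hX2 hφ2 hvbφ ht, baseline_payoff_eq hX1 hX2 hφ1 hφ2]
  exact div_sub_le_div_sub_iff hX2

theorem three_player_case2_precommit_iff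
    (X1 X2 φ1 φ2 vb : ℝ)
    (hX1 : 0 < X1) (hX1' : X1 < 1) (hX2 : 0 < X2) (hX2' : X2 < 1)
    (hφ1 : 0 < φ1) (hφ2 : 0 < φ2) (hvb : 0 < vb) (hvbφ : vb < φ1)
    (t : ℝ) (ht : t = X1 - ((φ1 - vb) / φ2) * X2) (ht0 : 0 < t) :
    ((φ1 - vb) * (1 -
        (1 - Real.sqrt (φ2 * ((X1 - t) / (1 - t)) * (X2 / (1 - t)) / (φ1 - vb)))
          / ((X1 - t) / (1 - t))) - vb
      ≥ φ1 * (X1 / Real.sqrt (φ1 * X1 * X2 / φ2) - 1))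
    ↔ φ2 * (X1 + X2 - 1) ≥ Real.sqrt (φ1 * φ2 * X1 * X2) - (φ1 - vb) * X2 :=
  three_player_case2_precommit_iff_general X1 X2 φ1 φ2 vb hX1 hX1' hX2 hφ1 hφ2 hvbφ t ht
end

section
/- In the three-player setting with t* = X₁ − ((φ₁ − v_b)/φ₂)X₂ > 0 and the adversary's optimal Case 2 (i=2) splits after calling or folding, the adversary's payoff for calling is at least its payoff for folding if and only if 2v_b ≥ (X₁ − ((φ₁ − v_b)/φ₂)X₂)·(φ₂/X₂), i.e. 2v_b ≥ t*·φ₂/X₂. -/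
/-! At `t*` the marginal values of the two sets balance, `(φ₁ - v_b) X₂' = φ₂ X₁'`, both after
calling and after folding. The adversary's payoff is affine in its split `X_{A1}`, and this balance
makes the slope vanish, so the payoff is `φ₂ / X₂' - (φ₁ - v_b) - φ₂ ± v_b` whatever split is used.
Comparing the two constants (`X₂' = X₂ / (1 - t*)` versus `X₂`) gives `2 v_b ≥ t* φ₂ / X₂`. -/

lemma split_payoff_eq_of_balanced {K : Type*} [Field K] {p q r s : K} (hp : p ≠ 0) (hq : q ≠ 0)
    (hbal : p * r = q * s) (x : K) : p * (x / s - 1) + q * ((1 - x) / r - 1) = q / r - p - q := by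
  rcases eq_or_ne r 0 with hr | hr
  -- then also `s = 0`, and both quotients are junk `0`s, which happen to satisfy the identity
  · have hs : s = 0 := by simpa [hr, hq] using hbal.symm
    simp only [hr, hs, div_zero]
    ring
  · have hs : s ≠ 0 := by
      rintro rfl
      simp [hp, hr] at hbal
    field_simp
    linear_combination x * hbal

theorem three_player_call_vs_fold_iff_general
    (X1 X2 φ1 φ2 vb : ℝ)
    (hφ2 : 0 < φ2) (hvbφ : vb < φ1)
    (t Xcall Xfold : ℝ)
    (ht : t = X1 - ((φ1 - vb) / φ2) * X2) :
    ((φ1 - vb) * (Xcall / ((X1 - t) / (1 - t)) - 1)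
        + φ2 * ((1 - Xcall) / (X2 / (1 - t)) - 1) + vb
      ≥ (φ1 - vb) * (Xfold / (X1 - t) - 1)
        + φ2 * ((1 - Xfold) / X2 - 1) - vb)
    ↔ 2 * vb ≥ (X1 - ((φ1 - vb) / φ2) * X2) * (φ2 / X2) := by
  have hφ' : φ1 - vb ≠ 0 := sub_ne_zero.mpr hvbφ.ne'
  have hbal : (φ1 - vb) * X2 = φ2 * (X1 - t) := by
    rw [ht]
    field_simp
    ring
  have hbal_call : (φ1 - vb) * (X2 / (1 - t)) = φ2 * ((X1 - t) / (1 - t)) := by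
    rw [← mul_div_assoc, hbal, mul_div_assoc]
  rw [split_payoff_eq_of_balanced hφ' hφ2.ne' hbal_call,
    split_payoff_eq_of_balanced hφ' hφ2.ne' hbal, ← ht]
  have hcall : φ2 / (X2 / (1 - t)) = φ2 / X2 - t * (φ2 / X2) := by
    rw [div_div_eq_mul_div]
    ring
  rw [hcall]
  constructor <;> intro h <;> linarith

theorem three_player_call_vs_fold_iff
    (X1 X2 φ1 φ2 vb : ℝ)
    (hX1 : 0 < X1) (hX1' : X1 < 1) (hX2 : 0 < X2) (hX2' : X2 < 1)
    (hφ1 : 0 < φ1) (hφ2 : 0 < φ2) (hvb : 0 < vb) (hvbφ : vb < φ1)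
    (t Xcall Xfold : ℝ)
    (ht : t = X1 - ((φ1 - vb) / φ2) * X2) (ht0 : 0 < t)
    (hXcall : Xcall =
      1 - Real.sqrt (φ2 * ((X1 - t) / (1 - t)) * (X2 / (1 - t)) / (φ1 - vb)))
    (hXfold : Xfold = 1 - Real.sqrt (φ2 * (X1 - t) * X2 / (φ1 - vb))) :
    ((φ1 - vb) * (Xcall / ((X1 - t) / (1 - t)) - 1)
        + φ2 * ((1 - Xcall) / (X2 / (1 - t)) - 1) + vb
      ≥ (φ1 - vb) * (Xfold / (X1 - t) - 1)
        + φ2 * ((1 - Xfold) / X2 - 1) - vb)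
    ↔ 2 * vb ≥ (X1 - ((φ1 - vb) / φ2) * X2) * (φ2 / X2) :=
  three_player_call_vs_fold_iff_general X1 X2 φ1 φ2 vb hφ2 hvbφ t Xcall Xfold ht
end
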